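/- (Donsker–Varadhan representation) For probability measures P and Q on a measurable space with P absolutely continuous with respect to Q, the Kullback–Leibler divergence satisfies D_KL(P ‖ Q) = sup_T { E_P[T] - log(E_Q[e^T]) }, where the supremum is taken over all measurable real-valued functions T for which the expectation of T under P and the expectation of e^T under Q are finite. -/

import Mathlib

open MeasureTheory Real Filter ENNReal

section DonskerVaradhanAux

variable {α : Type*} [MeasurableSpace α]


/-- The key lintegral bound: `∫ exp T / f dP ≤ ∫ exp T dQ` on the `lintegral` level. -/
lemma dv_lintegral_le (P Q : Measure α) [SigmaFinite P] [SigmaFinite Q] (hPQ : P ≪ Q)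
    {T : α → ℝ} (hTm : Measurable T) :
    ∫⁻ x, ENNReal.ofReal (Real.exp (T x) / (P.rnDeriv Q x).toReal) ∂P
      ≤ ∫⁻ x, ENNReal.ofReal (Real.exp (T x)) ∂Q := by
  have hfm := Measure.measurable_rnDeriv P Q
  set f := P.rnDeriv Q with hf
  have hPd : Q.withDensity f = P := Measure.withDensity_rnDeriv_eq P Q hPQ
  nth_rewrite 1 [← hPd]
  rw [lintegral_withDensity_eq_lintegral_mul Q hfm
    (g := fun x => ENNReal.ofReal (Real.exp (T x) / (f x).toReal))
    (hTm.exp.div hfm.ennreal_toReal).ennreal_ofReal]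
  refine lintegral_mono_ae ?_
  filter_upwards [hf ▸ Measure.rnDeriv_lt_top P Q] with x hx
  rcases eq_or_ne (f x) 0 with h0 | h0
  · simp [h0]
  · have hpos : 0 < (f x).toReal := ENNReal.toReal_pos h0 hx.ne
    simp only [Pi.mul_apply]
    calc f x * ENNReal.ofReal (Real.exp (T x) / (f x).toReal)
        = ENNReal.ofReal ((f x).toReal) * ENNReal.ofReal (Real.exp (T x) / (f x).toReal) := by
          rw [ENNReal.ofReal_toReal hx.ne]
      _ = ENNReal.ofReal ((f x).toReal * (Real.exp (T x) / (f x).toReal)) :=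
          (ENNReal.ofReal_mul ENNReal.toReal_nonneg).symm
      _ = ENNReal.ofReal (Real.exp (T x)) := by
          rw [mul_comm, div_mul_cancel₀ _ hpos.ne']
      _ ≤ ENNReal.ofReal (Real.exp (T x)) := le_rfl

/-- Gibbs' inequality / the easy direction of Donsker–Varadhan. -/
lemma dv_gibbs (P Q : Measure α) [IsProbabilityMeasure P] [IsProbabilityMeasure Q]
    (hPQ : P ≪ Q)
    (hL : Integrable (fun x => Real.log ((P.rnDeriv Q x).toReal)) P)
    {T : α → ℝ} (hTm : Measurable T) (hT : Integrable T P)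
    (hexp : Integrable (fun x => Real.exp (T x)) Q) :
    ∫ x, T x ∂P - Real.log (∫ x, Real.exp (T x) ∂Q) ≤
      ∫ x, Real.log ((P.rnDeriv Q x).toReal) ∂P := by
  have hfm : Measurable fun x => (P.rnDeriv Q x).toReal :=
    (Measure.measurable_rnDeriv P Q).ennreal_toReal
  set Z : ℝ := ∫ x, Real.exp (T x) ∂Q with hZ
  have hZpos : 0 < Z := integral_exp_pos hexp
  set g : α → ℝ := fun x => Real.exp (T x) / (P.rnDeriv Q x).toReal with hg
  have hgm : Measurable g := hTm.exp.div hfm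
  have hg_nn : 0 ≤ᵐ[P] g :=
    ae_of_all _ fun x => div_nonneg (Real.exp_pos _).le ENNReal.toReal_nonneg
  -- lintegral bound
  have hlint : ∫⁻ x, ENNReal.ofReal (g x) ∂P ≤ ENNReal.ofReal Z := by
    refine (dv_lintegral_le P Q hPQ hTm).trans_eq ?_
    rw [← ofReal_integral_eq_lintegral_ofReal hexp (ae_of_all _ fun x => (Real.exp_pos _).le)]
  have hg_int : Integrable g P := by
    refine ⟨hgm.aestronglyMeasurable, ?_⟩
    rw [hasFiniteIntegral_iff_ofReal hg_nn]
    exact hlint.trans_lt ENNReal.ofReal_lt_top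
  have hg_le : ∫ x, g x ∂P ≤ Z := by
    have := ofReal_integral_eq_lintegral_ofReal hg_int hg_nn
    have h2 : ENNReal.ofReal (∫ x, g x ∂P) ≤ ENNReal.ofReal Z := this ▸ hlint
    exact (ENNReal.ofReal_le_ofReal_iff hZpos.le).mp h2
  -- positivity of f a.e. P
  have hf_pos : ∀ᵐ x ∂P, 0 < (P.rnDeriv Q x).toReal := by
    filter_upwards [Measure.rnDeriv_pos hPQ, hPQ.ae_le (Measure.rnDeriv_lt_top P Q)]
      with x h1 h2
    exact ENNReal.toReal_pos h1.ne' h2.ne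
  -- log g = T - log f a.e.
  have hlog_eq : (fun x => Real.log (g x)) =ᵐ[P]
      fun x => T x - Real.log ((P.rnDeriv Q x).toReal) := by
    filter_upwards [hf_pos] with x hx
    rw [hg]
    simp only
    rw [Real.log_div (Real.exp_ne_zero _) hx.ne', Real.log_exp]
  have hlogg_int : Integrable (fun x => Real.log (g x)) P :=
    (hT.sub hL).congr hlog_eq.symm
  -- tangent line bound
  have hpt : ∀ᵐ x ∂P, Real.log (g x) ≤ g x / Z - 1 + Real.log Z := by
    filter_upwards [hf_pos] with x hx
    have hgx : 0 < g x := div_pos (Real.exp_pos _) hx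
    have := Real.log_le_sub_one_of_pos (div_pos hgx hZpos)
    rw [Real.log_div hgx.ne' hZpos.ne'] at this
    linarith
  have hmain : ∫ x, Real.log (g x) ∂P ≤ Real.log Z := by
    have h1 : Integrable (fun x => g x / Z - 1) P :=
      (hg_int.div_const Z).sub (integrable_const 1)
    have hrhs_int : Integrable (fun x => g x / Z - 1 + Real.log Z) P :=
      h1.add (integrable_const _)
    calc ∫ x, Real.log (g x) ∂P ≤ ∫ x, (g x / Z - 1 + Real.log Z) ∂P :=
          integral_mono_ae hlogg_int hrhs_int hpt
      _ = (∫ x, g x ∂P) / Z - 1 + Real.log Z := by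
          rw [integral_add h1 (integrable_const _),
            integral_sub (hg_int.div_const Z) (integrable_const 1), integral_div]
          simp
      _ ≤ Z / Z - 1 + Real.log Z := by gcongr
      _ = Real.log Z := by rw [div_self hZpos.ne']; ring
  have : ∫ x, Real.log (g x) ∂P =
      ∫ x, T x ∂P - ∫ x, Real.log ((P.rnDeriv Q x).toReal) ∂P := by
    rw [integral_congr_ae hlog_eq, integral_sub hT hL]
  linarith [hmain, this]


/-- The negative part of `log (dP/dQ)` is always `P`-integrable. -/
lemma dv_neg_part_integrable (P Q : Measure α) [IsProbabilityMeasure P]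
    [IsProbabilityMeasure Q] (hPQ : P ≪ Q) :
    Integrable (fun x => min (Real.log ((P.rnDeriv Q x).toReal)) 0) P := by
  have hfm : Measurable fun x => (P.rnDeriv Q x).toReal :=
    (Measure.measurable_rnDeriv P Q).ennreal_toReal
  set g0 : α → ℝ := fun x => ((P.rnDeriv Q x)⁻¹).toReal with hg0
  have hg0m : Measurable g0 := (Measure.measurable_rnDeriv P Q).inv.ennreal_toReal
  have hg0_nn : 0 ≤ᵐ[P] g0 := ae_of_all _ fun x => ENNReal.toReal_nonneg
  have hg0_int : Integrable g0 P := by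
    refine ⟨hg0m.aestronglyMeasurable, ?_⟩
    rw [hasFiniteIntegral_iff_ofReal hg0_nn]
    have hle : ∫⁻ x, ENNReal.ofReal (g0 x) ∂P ≤ 1 := by
      have hPd : Q.withDensity (P.rnDeriv Q) = P := Measure.withDensity_rnDeriv_eq P Q hPQ
      calc ∫⁻ x, ENNReal.ofReal (g0 x) ∂P
          ≤ ∫⁻ x, (P.rnDeriv Q x)⁻¹ ∂P := lintegral_mono fun x => ENNReal.ofReal_toReal_le
        _ = ∫⁻ x, (P.rnDeriv Q x * (P.rnDeriv Q x)⁻¹) ∂Q := by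
            nth_rewrite 1 [← hPd]
            rw [lintegral_withDensity_eq_lintegral_mul Q (Measure.measurable_rnDeriv P Q)
              (g := fun x => (P.rnDeriv Q x)⁻¹)
              (Measure.measurable_rnDeriv P Q).inv]
            rfl
        _ ≤ ∫⁻ _, 1 ∂Q := lintegral_mono fun x => ENNReal.mul_inv_le_one _
        _ = 1 := by simp
    exact hle.trans_lt ENNReal.one_lt_top
  refine hg0_int.mono' ((hfm.log.min measurable_const).aestronglyMeasurable) ?_
  filter_upwards [Measure.rnDeriv_pos hPQ, hPQ.ae_le (Measure.rnDeriv_lt_top P Q)]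
    with x h1 h2
  have hpos : 0 < (P.rnDeriv Q x).toReal := ENNReal.toReal_pos h1.ne' h2.ne
  have hlog : -Real.log ((P.rnDeriv Q x).toReal) ≤ ((P.rnDeriv Q x).toReal)⁻¹ := by
    have := Real.log_le_sub_one_of_pos (inv_pos.mpr hpos)
    rw [Real.log_inv] at this
    have hinv : 0 < ((P.rnDeriv Q x).toReal)⁻¹ := inv_pos.mpr hpos
    linarith
  have hg0x : g0 x = ((P.rnDeriv Q x).toReal)⁻¹ := by
    rw [hg0]; simp [ENNReal.toReal_inv]
  rw [hg0x, Real.norm_eq_abs, abs_le]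
  have hinv : 0 < ((P.rnDeriv Q x).toReal)⁻¹ := inv_pos.mpr hpos
  exact ⟨le_min (by linarith) (by linarith),
    (min_le_right _ _).trans hinv.le⟩

/-- If `log (dP/dQ)` is not `P`-integrable, the Donsker–Varadhan set is unbounded above. -/
lemma dv_not_bddAbove (P Q : Measure α) [IsProbabilityMeasure P] [IsProbabilityMeasure Q]
    (hPQ : P ≪ Q)
    (hL : ¬ Integrable (fun x => Real.log ((P.rnDeriv Q x).toReal)) P) :
    ¬ BddAbove {r : ℝ | ∃ T : α → ℝ, Measurable T ∧ Integrable T P ∧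
        Integrable (fun x => Real.exp (T x)) Q ∧
        r = ∫ x, T x ∂P - Real.log (∫ x, Real.exp (T x) ∂Q)} := by
  have hfm : Measurable fun x => (P.rnDeriv Q x).toReal :=
    (Measure.measurable_rnDeriv P Q).ennreal_toReal
  have hLm : Measurable fun x => Real.log ((P.rnDeriv Q x).toReal) := hfm.log
  set L : α → ℝ := fun x => Real.log ((P.rnDeriv Q x).toReal) with hLdef
  have hLneg_int : Integrable (fun x => min (L x) 0) P := dv_neg_part_integrable P Q hPQ
  have hLpos_m : Measurable (fun x => max (L x) 0) := hLm.max measurable_const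
  have hLpos_not : ¬ Integrable (fun x => max (L x) 0) P := by
    intro h
    refine hL ((h.add hLneg_int).congr (ae_of_all _ fun x => ?_))
    show (max (L x) 0) + (min (L x) 0) = L x
    rcases le_total (L x) 0 with hx | hx
    · rw [max_eq_right hx, min_eq_left hx, zero_add]
    · rw [max_eq_left hx, min_eq_right hx, add_zero]
  have htop : ∫⁻ x, ENNReal.ofReal (max (L x) 0) ∂P = ∞ := by
    by_contra hfin
    exact hLpos_not ⟨hLpos_m.aestronglyMeasurable,
      (hasFiniteIntegral_iff_ofReal (ae_of_all _ fun x => le_max_right _ _)).mpr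
        (lt_top_iff_ne_top.mpr hfin)⟩
  have hsup : ⨆ n : ℕ, ∫⁻ x, ENNReal.ofReal (min (max (L x) 0) (n:ℝ)) ∂P = ∞ := by
    rw [← lintegral_iSup (fun n => (hLpos_m.min measurable_const).ennreal_ofReal)
      (fun n m hnm x => ENNReal.ofReal_le_ofReal
        (min_le_min le_rfl (by exact_mod_cast hnm)))]
    rw [← htop]
    refine lintegral_congr fun x => ?_
    refine le_antisymm (iSup_le fun n => ENNReal.ofReal_le_ofReal (min_le_left _ _)) ?_
    refine le_iSup_of_le ⌈max (L x) 0⌉₊ ?_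
    rw [min_eq_left (Nat.le_ceil _)]
  rintro ⟨M, hM⟩
  -- for each n, bound the truncated integral
  have hbound : ∀ n : ℕ,
      ∫⁻ x, ENNReal.ofReal (min (max (L x) 0) (n:ℝ)) ∂P
        ≤ ENNReal.ofReal (M + Real.log 2 - ∫ x, min (L x) 0 ∂P) := by
    intro n
    set T : α → ℝ := fun x => min (L x) (n:ℝ) with hTdef
    have hTm : Measurable T := hLm.min measurable_const
    have hT_int : Integrable T P := by
      refine ((integrable_const ((n:ℝ))).add hLneg_int.abs).mono'
        hTm.aestronglyMeasurable (ae_of_all _ fun x => ?_)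
      rw [Real.norm_eq_abs]
      rcases le_total (L x) 0 with hx | hx
      · rw [hTdef]
        simp only
        rw [min_eq_left (hx.trans (Nat.cast_nonneg n))]
        calc |L x| = |min (L x) 0| := by rw [min_eq_left hx]
          _ ≤ (n:ℝ) + |min (L x) 0| := le_add_of_nonneg_left (Nat.cast_nonneg n)
      · have h0 : 0 ≤ T x := le_min hx (Nat.cast_nonneg n)
        rw [abs_of_nonneg h0]
        calc T x ≤ (n:ℝ) := min_le_right _ _
          _ ≤ (n:ℝ) + |min (L x) 0| := le_add_of_nonneg_right (abs_nonneg _)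
    have hexp_int : Integrable (fun x => Real.exp (T x)) Q := by
      refine (integrable_const (Real.exp (n:ℝ))).mono'
        hTm.exp.aestronglyMeasurable (ae_of_all _ fun x => ?_)
      rw [Real.norm_eq_abs, abs_of_pos (Real.exp_pos _)]
      exact Real.exp_le_exp.mpr (min_le_right _ _)
    have hZ_le : ∫ x, Real.exp (T x) ∂Q ≤ 2 := by
      have hle : ∀ᵐ x ∂Q, Real.exp (T x) ≤ (P.rnDeriv Q x).toReal + 1 := by
        filter_upwards [Measure.rnDeriv_lt_top P Q] with x hx
        rcases eq_or_ne (P.rnDeriv Q x) 0 with h0 | h0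
        · have : L x = 0 := by rw [hLdef]; simp [h0]
          rw [hTdef]
          simp only [this]
          rw [min_eq_left (Nat.cast_nonneg n)]
          simp [h0]
        · have hpos : 0 < (P.rnDeriv Q x).toReal := ENNReal.toReal_pos h0 hx.ne
          calc Real.exp (T x) ≤ Real.exp (L x) := Real.exp_le_exp.mpr (min_le_left _ _)
            _ = (P.rnDeriv Q x).toReal := Real.exp_log hpos
            _ ≤ (P.rnDeriv Q x).toReal + 1 := by linarith
      calc ∫ x, Real.exp (T x) ∂Q
          ≤ ∫ x, ((P.rnDeriv Q x).toReal + 1) ∂Q :=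
            integral_mono_ae hexp_int
              (Measure.integrable_toReal_rnDeriv.add (integrable_const 1)) hle
        _ = 2 := by
            rw [integral_add Measure.integrable_toReal_rnDeriv (integrable_const 1),
              Measure.integral_toReal_rnDeriv hPQ]
            simp
            norm_num
    have hZpos : 0 < ∫ x, Real.exp (T x) ∂Q := integral_exp_pos hexp_int
    have hlogZ : Real.log (∫ x, Real.exp (T x) ∂Q) ≤ Real.log 2 := by
      gcongr
    have hI_int : Integrable (fun x => min (max (L x) 0) (n:ℝ)) P := by
      refine (integrable_const ((n:ℝ))).mono'
        (hLpos_m.min measurable_const).aestronglyMeasurable (ae_of_all _ fun x => ?_)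
      rw [Real.norm_eq_abs, abs_of_nonneg (le_min (le_max_right _ _) (Nat.cast_nonneg n))]
      exact min_le_right _ _
    have hsplit : ∫ x, T x ∂P =
        (∫ x, min (max (L x) 0) (n:ℝ) ∂P) + ∫ x, min (L x) 0 ∂P := by
      rw [← integral_add hI_int hLneg_int]
      refine integral_congr_ae (ae_of_all _ fun x => ?_)
      rw [hTdef]
      rcases le_total (L x) 0 with hx | hx
      · simp only
        rw [min_eq_left (hx.trans (Nat.cast_nonneg n)), max_eq_right hx, min_eq_left hx,
          min_eq_left (Nat.cast_nonneg n), zero_add]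
      · simp only
        rw [max_eq_left hx, min_eq_right hx, add_zero]
    have hmem : (∫ x, T x ∂P - Real.log (∫ x, Real.exp (T x) ∂Q)) ≤ M :=
      hM ⟨T, hTm, hT_int, hexp_int, rfl⟩
    have hIle : ∫ x, min (max (L x) 0) (n:ℝ) ∂P ≤ M + Real.log 2 - ∫ x, min (L x) 0 ∂P := by
      rw [hsplit] at hmem
      linarith
    rw [← ofReal_integral_eq_lintegral_ofReal hI_int
      (ae_of_all _ fun x => le_min (le_max_right _ _) (Nat.cast_nonneg n))]
    exact ENNReal.ofReal_le_ofReal hIle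
  have : (⨆ n : ℕ, ∫⁻ x, ENNReal.ofReal (min (max (L x) 0) (n:ℝ)) ∂P)
      ≤ ENNReal.ofReal (M + Real.log 2 - ∫ x, min (L x) 0 ∂P) := iSup_le hbound
  rw [hsup] at this
  exact (this.trans_lt ENNReal.ofReal_lt_top).ne rfl

end DonskerVaradhanAux

/-- Donsker–Varadhan representation: for probability measures `P ≪ Q`,
`D_KL(P ‖ Q) = ∫ log (dP/dQ) dP` equals the supremum of
`E_P[T] - log E_Q[exp T]` over all measurable `T` with `T` integrable
w.r.t. `P` and `exp ∘ T` integrable w.r.t. `Q`. -/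
theorem donsker_varadhan_representation {α : Type*} [MeasurableSpace α]
    (P Q : Measure α) [IsProbabilityMeasure P] [IsProbabilityMeasure Q]
    (hPQ : P ≪ Q) :
    ∫ x, Real.log ((P.rnDeriv Q x).toReal) ∂P =
      sSup {r : ℝ | ∃ T : α → ℝ, Measurable T ∧ Integrable T P ∧
        Integrable (fun x => Real.exp (T x)) Q ∧
        r = ∫ x, T x ∂P - Real.log (∫ x, Real.exp (T x) ∂Q)} := by
  have hfm : Measurable fun x => (P.rnDeriv Q x).toReal :=
    (Measure.measurable_rnDeriv P Q).ennreal_toReal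
  have hLm : Measurable fun x => Real.log ((P.rnDeriv Q x).toReal) := hfm.log
  set S : Set ℝ := {r : ℝ | ∃ T : α → ℝ, Measurable T ∧ Integrable T P ∧
        Integrable (fun x => Real.exp (T x)) Q ∧
        r = ∫ x, T x ∂P - Real.log (∫ x, Real.exp (T x) ∂Q)} with hS
  have hne : S.Nonempty := by
    refine ⟨0, fun _ => 0, measurable_const, integrable_const 0, ?_, ?_⟩
    · simpa using integrable_const (1:ℝ)
    · simp
  by_cases hL : Integrable (fun x => Real.log ((P.rnDeriv Q x).toReal)) P
  · have hbdd : BddAbove S := by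
      refine ⟨∫ x, Real.log ((P.rnDeriv Q x).toReal) ∂P, ?_⟩
      rintro r ⟨T, hTm, hT, hexp, rfl⟩
      exact dv_gibbs P Q hPQ hL hTm hT hexp
    refine le_antisymm ?_ (csSup_le hne ?_)
    swap
    · rintro r ⟨T, hTm, hT, hexp, rfl⟩
      exact dv_gibbs P Q hPQ hL hTm hT hexp
    -- approximation from below
    set s : Set α := {x | P.rnDeriv Q x = 0} with hs_def
    have hs : MeasurableSet s := Measure.measurable_rnDeriv P Q (measurableSet_singleton 0)
    have hPs : P s = 0 := by
      refine measure_eq_zero_iff_ae_notMem.mpr ?_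
      filter_upwards [Measure.rnDeriv_pos hPQ] with x hx
      exact fun hmem => hx.ne' hmem
    set q : ℝ := (Q s).toReal with hq_def
    have key : ∀ n : ℕ,
        (∫ x, Real.log ((P.rnDeriv Q x).toReal) ∂P) -
          Real.log (1 + Real.exp (-(n:ℝ)) * q) ≤ sSup S := by
      intro n
      set T : α → ℝ :=
        fun x => Real.log ((P.rnDeriv Q x).toReal) +
          s.indicator (fun _ => -(n:ℝ)) x with hTdef
      have hTm : Measurable T := hLm.add (measurable_const.indicator hs)
      have hind0 : (fun x => s.indicator (fun _ : α => -(n:ℝ)) x) =ᵐ[P]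
          (fun _ => (0:ℝ)) := by
        filter_upwards [measure_eq_zero_iff_ae_notMem.mp hPs] with x hx
        simp [Set.indicator_of_notMem hx]
      have hind_int : Integrable (fun x => s.indicator (fun _ : α => -(n:ℝ)) x) P :=
        (integrable_const (0:ℝ)).congr hind0.symm
      have hT_int : Integrable T P := hL.add hind_int
      have hT_eq : ∫ x, T x ∂P = ∫ x, Real.log ((P.rnDeriv Q x).toReal) ∂P := by
        rw [hTdef]
        rw [integral_add hL hind_int, integral_congr_ae hind0]
        simp
      have hexp_eq : (fun x => Real.exp (T x)) =ᵐ[Q]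
          fun x => (P.rnDeriv Q x).toReal +
            s.indicator (fun _ => Real.exp (-(n:ℝ))) x := by
        filter_upwards [Measure.rnDeriv_lt_top P Q] with x hx
        by_cases hxs : x ∈ s
        · have h0 : P.rnDeriv Q x = 0 := hxs
          simp [hTdef, Set.indicator_of_mem hxs, h0]
        · have h0 : P.rnDeriv Q x ≠ 0 := hxs
          have hpos : 0 < (P.rnDeriv Q x).toReal := ENNReal.toReal_pos h0 hx.ne
          simp [hTdef, Set.indicator_of_notMem hxs, Real.exp_log hpos]
      have hind_intQ : Integrable (fun x => s.indicator
          (fun _ : α => Real.exp (-(n:ℝ))) x) Q :=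
        (integrable_const _).indicator hs
      have hexp_int : Integrable (fun x => Real.exp (T x)) Q :=
        (Measure.integrable_toReal_rnDeriv.add hind_intQ).congr hexp_eq.symm
      have hZ_eq : ∫ x, Real.exp (T x) ∂Q = 1 + Real.exp (-(n:ℝ)) * q := by
        rw [integral_congr_ae hexp_eq,
          integral_add Measure.integrable_toReal_rnDeriv hind_intQ,
          Measure.integral_toReal_rnDeriv hPQ, integral_indicator_const _ hs]
        simp [measure_univ, hq_def, mul_comm, Measure.real]
      refine le_csSup hbdd ⟨T, hTm, hT_int, hexp_int, ?_⟩
      rw [hT_eq, hZ_eq]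
    have h0 : Tendsto (fun n : ℕ => Real.exp (-(n:ℝ))) atTop (nhds 0) :=
      Real.tendsto_exp_neg_atTop_nhds_zero.comp tendsto_natCast_atTop_atTop
    have h1 : Tendsto (fun n : ℕ => 1 + Real.exp (-(n:ℝ)) * q) atTop (nhds 1) := by
      have := tendsto_const_nhds (x := (1:ℝ)) (f := atTop (α := ℕ)) |>.add (h0.mul_const q)
      simpa using this
    have h2 : Tendsto (fun n : ℕ => Real.log (1 + Real.exp (-(n:ℝ)) * q)) atTop (nhds 0) := by
      have := (Real.continuousAt_log one_ne_zero).tendsto.comp h1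
      simpa [Function.comp_def] using this
    have h3 : Tendsto (fun n : ℕ =>
        (∫ x, Real.log ((P.rnDeriv Q x).toReal) ∂P) -
          Real.log (1 + Real.exp (-(n:ℝ)) * q)) atTop
        (nhds (∫ x, Real.log ((P.rnDeriv Q x).toReal) ∂P)) := by
      have := tendsto_const_nhds
        (x := ∫ x, Real.log ((P.rnDeriv Q x).toReal) ∂P) (f := atTop (α := ℕ)) |>.sub h2
      simpa using this
    exact le_of_tendsto h3 (Eventually.of_forall key)
  · rw [integral_undef hL, Real.sSup_of_not_bddAbove (hS ▸ dv_not_bddAbove P Q hPQ hL)]
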